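/- Let C be a groupoid with an action of a group G (functors F_g, coherent natural isomorphisms τ_{g,h}, strict units), and suppose C is a G_m-gerbe. Fixing an object A, the function assigning to (g,h) ∈ G × G the ratio in k* measuring the failure of chosen trivializations to be multiplicative is a 2-cocycle: explicitly, choose for each g an isomorphism φ_g : F_g(A) → A with φ_1 = id; then c(g,h) ∈ k* ≅ Aut(A) defined by c(g,h) = φ_g ∘ F_g(φ_h) ∘ τ_{g,h}(A) ∘ φ_{gh}⁻¹ satisfies the 2-cocycle identity c(g,h)·c(gh,l) = c(h,l)·c(g,hl) (identifying Aut(A) with the central k* acting on all Hom-sets). -/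
import Mathlib


open CategoryTheory

universe u v

/-- An action of a group `G` on a category `C`: functors `F g` together with
natural isomorphisms `τ g h : F (g*h) ≅ F h ⋙ F g` (i.e. `F_g ∘ F_h` in the usual
composition order), satisfying the pentagon-type cocycle condition and strict
unitality conditions `F 1 = Id`, `τ 1 g = id`, `τ g 1 = id`. -/
structure GerbeAction (G : Type) [Group G] (C : Type u) [Groupoid.{v} C] where
  F : G → C ⥤ C
  τ : ∀ g h : G, F (g * h) ≅ F h ⋙ F g
  F_one : F 1 = 𝟭 C
  τ_one_left : ∀ g : G, τ 1 g = eqToIso (by rw [one_mul, F_one, Functor.comp_id])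
  τ_one_right : ∀ g : G, τ g 1 = eqToIso (by rw [mul_one, F_one, Functor.id_comp])
  cocycle : ∀ (g₁ g₂ g₃ : G) (X : C),
    (τ (g₁ * g₂) g₃).hom.app X ≫ (τ g₁ g₂).hom.app ((F g₃).obj X)
      = eqToHom (by rw [mul_assoc]) ≫ (τ g₁ (g₂ * g₃)).hom.app X
          ≫ (F g₁).map ((τ g₂ g₃).hom.app X)

/-- The underlying set of the central extension `Ĝ_A`: pairs `(g, φ)` with
`φ : F_g(A) → A`. -/
def GerbeAction.Ext {G : Type} [Group G] {C : Type u} [Groupoid.{v} C]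
    (A : GerbeAction G C) (X : C) : Type _ :=
  (g : G) × ((A.F g).obj X ⟶ X)

/-- The product `(g₁, φ₁)(g₂, φ₂) = (g₁ g₂, φ₁ ∘ F_{g₁}(φ₂) ∘ τ_{g₁,g₂}(A))`. -/
def GerbeAction.extMul {G : Type} [Group G] {C : Type u} [Groupoid.{v} C]
    (A : GerbeAction G C) (X : C) (x y : A.Ext X) : A.Ext X :=
  ⟨x.1 * y.1, (A.τ x.1 y.1).hom.app X ≫ (A.F x.1).map y.2 ≫ x.2⟩


/-- Fixing trivializations `φ_g : F_g(A) → A` with `φ_1 = id`, the failure of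
multiplicativity `c(g,h) ∈ kˣ`, defined by
`φ_g ∘ F_g(φ_h) ∘ τ_{g,h}(A) = c(g,h) · φ_{gh}`, is a 2-cocycle:
`c(g,h)·c(gh,l) = c(h,l)·c(g,hl)`. -/
theorem stmt17 {k : Type} [Field k] (G : Type) [Group G] (C : Type u) [Groupoid.{v} C]
    (A : GerbeAction G C) [Nonempty C]
    (hconn : ∀ X Y : C, Nonempty (X ⟶ Y))
    (hgerbe : ∀ X : C, Nonempty (Aut X ≃* kˣ))
    -- the `kˣ`-action on Hom-sets, making them `kˣ`-torsors, with `kˣ`-bilinear composition: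
    (act : ∀ (c : kˣ) {P Q : C}, (P ⟶ Q) → (P ⟶ Q))
    (hact_torsor : ∀ (P Q : C) (f f' : P ⟶ Q), ∃! c : kˣ, act c f = f')
    (hact_one : ∀ {P Q : C} (f : P ⟶ Q), act 1 f = f)
    (hact_mul : ∀ (c c' : kˣ) {P Q : C} (f : P ⟶ Q), act c (act c' f) = act (c * c') f)
    (hact_comp_left : ∀ (c : kˣ) {P Q R : C} (f : P ⟶ Q) (g : Q ⟶ R),
      act c f ≫ g = act c (f ≫ g))
    (hact_comp_right : ∀ (c : kˣ) {P Q R : C} (f : P ⟶ Q) (g : Q ⟶ R),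
      f ≫ act c g = act c (f ≫ g))
    (hact_map : ∀ (c : kˣ) (g : G) {P Q : C} (f : P ⟶ Q),
      (A.F g).map (act c f) = act c ((A.F g).map f))
    -- chosen trivializations:
    (X : C) (φ : ∀ g : G, (A.F g).obj X ⟶ X)
    (hφ1 : φ 1 = eqToHom (by rw [A.F_one]; rfl))
    -- the cocycle `c`, defined by the failure of multiplicativity of the `φ_g`:
    (c : G → G → kˣ)
    (hc : ∀ g h : G,
      (A.τ g h).hom.app X ≫ (A.F g).map (φ h) ≫ φ g = act (c g h) (φ (g * h))) :
    ∀ g h l : G, c g h * c (g * h) l = c h l * c g (h * l) := by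
  intro g h l
  have cancel : ∀ {P Q : C} (f : P ⟶ Q) (a b : kˣ), act a f = act b f → a = b := by
    intro P Q f a b hab
    obtain ⟨u, -, huniq⟩ := hact_torsor P Q f (act a f)
    exact (huniq a rfl).trans (huniq b hab.symm).symm
  have gen : ∀ (a b : G) (e : a = b),
      (eqToHom (by rw [e]) ≫ φ b : (A.F a).obj X ⟶ X) = φ a := by
    intro a b e; subst e; simp
  have key1 : (A.τ g (h*l)).hom.app X
        ≫ (A.F g).map ((A.τ h l).hom.app X ≫ (A.F h).map (φ l) ≫ φ h) ≫ φ g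
      = act (c h l * c g (h * l)) (φ (g * (h * l))) := by
    rw [hc h l, hact_map, hact_comp_left, hact_comp_right, hc g (h*l), hact_mul]
  have nat : (A.F (g*h)).map (φ l) ≫ (A.τ g h).hom.app X
      = (A.τ g h).hom.app ((A.F l).obj X) ≫ (A.F g).map ((A.F h).map (φ l)) :=
    (A.τ g h).hom.naturality (φ l)
  have coc : (A.τ g (h*l)).hom.app X ≫ (A.F g).map ((A.τ h l).hom.app X)
      = eqToHom (by rw [mul_assoc]) ≫ (A.τ (g*h) l).hom.app X
          ≫ (A.τ g h).hom.app ((A.F l).obj X) := by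
    have h1 := A.cocycle g h l X
    rw [h1]
    simp
  have key2 : (A.τ g (h*l)).hom.app X
        ≫ (A.F g).map ((A.τ h l).hom.app X ≫ (A.F h).map (φ l) ≫ φ h) ≫ φ g
      = act (c g h * c (g*h) l)
          (eqToHom (by rw [mul_assoc]) ≫ φ (g * h * l)) := by
    calc (A.τ g (h*l)).hom.app X
        ≫ (A.F g).map ((A.τ h l).hom.app X ≫ (A.F h).map (φ l) ≫ φ h) ≫ φ g
        = ((A.τ g (h*l)).hom.app X ≫ (A.F g).map ((A.τ h l).hom.app X))
            ≫ (A.F g).map ((A.F h).map (φ l)) ≫ (A.F g).map (φ h) ≫ φ g := by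
          simp [Functor.map_comp]
      _ = eqToHom (by rw [mul_assoc]) ≫ (A.τ (g*h) l).hom.app X
            ≫ ((A.τ g h).hom.app ((A.F l).obj X) ≫ (A.F g).map ((A.F h).map (φ l)))
            ≫ (A.F g).map (φ h) ≫ φ g := by
          rw [coc]; simp
      _ = eqToHom (by rw [mul_assoc]) ≫ (A.τ (g*h) l).hom.app X
            ≫ (A.F (g*h)).map (φ l)
            ≫ ((A.τ g h).hom.app X ≫ (A.F g).map (φ h) ≫ φ g) := by
          rw [← nat]; simp
      _ = eqToHom (by rw [mul_assoc]) ≫ (A.τ (g*h) l).hom.app X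
            ≫ (A.F (g*h)).map (φ l) ≫ act (c g h) (φ (g*h)) := by
          rw [hc g h]
      _ = act (c g h) (eqToHom (by rw [mul_assoc])
            ≫ ((A.τ (g*h) l).hom.app X ≫ (A.F (g*h)).map (φ l) ≫ φ (g*h))) := by
          rw [hact_comp_right, hact_comp_right, hact_comp_right]
      _ = act (c g h) (eqToHom (by rw [mul_assoc]) ≫ act (c (g*h) l) (φ (g*h*l))) := by
          rw [hc (g*h) l]
      _ = act (c g h * c (g*h) l) (eqToHom (by rw [mul_assoc]) ≫ φ (g * h * l)) := by
          rw [hact_comp_right, hact_mul]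
  rw [gen (g*(h*l)) (g*h*l) (mul_assoc g h l).symm] at key2
  exact cancel _ _ _ (key2.symm.trans key1)
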